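/- Under the hypotheses of the propagator difference formula, assume additionally a_1 := sup_{t≤r} max(‖U_1^{t,r}‖_{B→B}, ‖U_2^{t,r}‖_{B→B}) < ∞ and a_2 := sup_{t≤r} ‖U_1^{t,r}‖_{D→D} < ∞. Then for all t ≤ r: ‖U_2^{t,r} - U_1^{t,r}‖_{D→B} ≤ a_1 a_2 (r-t) sup_{t≤s≤r} ‖L^2_s - L^1_s‖_{D→B}. -/

import Mathlib

/-! The map `φ s = U 1 t s (U 0 s r (j f))` runs from `U 0 t r (j f)` at `s = t` to
`U 1 t r (j f)` at `s = r`, and by the product rule its derivative on `[t, r]` is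
`U 1 t s ((L 1 s - L 0 s) (V s r f))`, of norm at most `a₁ c a₂ ‖f‖`; the mean value inequality
concludes.

The product rule only needs `σ ↦ U 1 t σ` to be strongly continuous at the derivative of
`σ ↦ U 0 σ r (j f)`. That derivative is a limit of difference quotients lying in `range j`,
so it lies in the closure of `range j`, and the uniform bound `a₁` extends the strong continuity
on `range j` given by the generator hypothesis to this closure. -/

open Filter Set Topology

section StrongDerivative

variable {𝕜 E F : Type*} [NontriviallyNormedField 𝕜]
  [NormedAddCommGroup E] [NormedSpace 𝕜 E] [NormedAddCommGroup F] [NormedSpace 𝕜 F]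

theorem tendsto_clm_apply_of_mem_closure {ι : Type*} {l : Filter ι} {A : ι → E →L[𝕜] F}
    {A₀ : E →L[𝕜] F} {M : ℝ} (hA : ∀ᶠ i in l, ‖A i‖ ≤ M) {S : Set E}
    (hS : ∀ w ∈ S, Tendsto (fun i => A i w) l (𝓝 (A₀ w))) {v : E} (hv : v ∈ closure S) :
    Tendsto (fun i => A i v) l (𝓝 (A₀ v)) := by
  rw [Metric.tendsto_nhds]
  intro ε hε
  obtain ⟨w, hwS, hvw⟩ := Metric.mem_closure_iff.1 hv (ε / (2 * (|M| + ‖A₀‖ + 1))) (by positivity)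
  rw [lt_div_iff₀ (by positivity)] at hvw
  filter_upwards [hA, Metric.tendsto_nhds.1 (hS w hwS) (ε / 2) (by positivity)] with i hAi hi
  have hAv : dist (A i v) (A i w) ≤ |M| * dist v w :=
    ((A i).dist_le_opNorm v w).trans
      (mul_le_mul_of_nonneg_right (hAi.trans (le_abs_self M)) dist_nonneg)
  have hA₀ : dist (A₀ w) (A₀ v) ≤ ‖A₀‖ * dist v w := dist_comm (A₀ v) _ ▸ A₀.dist_le_opNorm v w
  calc dist (A i v) (A₀ v)
      ≤ dist (A i v) (A i w) + dist (A i w) (A₀ w) + dist (A₀ w) (A₀ v) := dist_triangle4 ..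
    _ < ε := by nlinarith [dist_nonneg (x := v) (y := w)]

theorem HasDerivAt.mem_closure_of_forall_mem {y : 𝕜 → E} {y' : E} {x : 𝕜} (hy : HasDerivAt y y' x)
    {K : Submodule 𝕜 E} (hyK : ∀ s, y s ∈ K) : y' ∈ closure (K : Set E) :=
  mem_closure_of_tendsto (hasDerivAt_iff_tendsto_slope.1 hy) <| Eventually.of_forall fun s =>
    K.smul_mem _ (K.sub_mem (hyK s) (hyK x))

theorem HasDerivWithinAt.clm_apply_of_norm_le {A : 𝕜 → E →L[𝕜] F} {y : 𝕜 → E} {y' : E} {a : F}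
    {S : Set 𝕜} {x : 𝕜} {M : ℝ} (hA : ∀ᶠ s in 𝓝[S] x, ‖A s‖ ≤ M)
    (hy : HasDerivWithinAt y y' S x) (hAy' : ContinuousWithinAt (fun s => A s y') S x)
    (hAy : HasDerivWithinAt (fun s => A s (y x)) a S x) :
    HasDerivWithinAt (fun s => A s (y s)) (a + A x y') S x := by
  rw [hasDerivWithinAt_iff_tendsto_slope] at hy hAy ⊢
  have hslope : ∀ s, slope (fun s => A s (y s)) x s =
      A s (slope y x s - y') + A s y' + slope (fun s => A s (y x)) x s := by
    intro s
    simp only [slope_def_module, map_sub, map_smul, smul_sub]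
    abel
  have hlim : Tendsto (fun s => A s (slope y x s - y')) (𝓝[S \ {x}] x) (𝓝 0) := by
    refine squeeze_zero_norm' ?_ (by simpa using (tendsto_sub_nhds_zero_iff.2 hy).norm.const_mul M)
    filter_upwards [nhdsWithin_mono x sdiff_subset hA] with s hs
    exact (A s).le_of_opNorm_le hs _
  have := (hlim.add (hAy'.tendsto.mono_left (nhdsWithin_mono x sdiff_subset))).add hAy
  rw [zero_add, add_comm] at this
  exact this.congr fun s => (hslope s).symm

theorem HasDerivWithinAt.clm_apply_of_mem_submodule {A : 𝕜 → E →L[𝕜] F} {y : 𝕜 → E} {y' : E}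
    {a : F} {S : Set 𝕜} {x : 𝕜} {M : ℝ} {K : Submodule 𝕜 E} (hA : ∀ᶠ s in 𝓝[S] x, ‖A s‖ ≤ M)
    (hAK : ∀ w ∈ K, ContinuousWithinAt (fun s => A s w) S x) (hy : HasDerivAt y y' x)
    (hyK : ∀ s, y s ∈ K) (hAy : HasDerivWithinAt (fun s => A s (y x)) a S x) :
    HasDerivWithinAt (fun s => A s (y s)) (a + A x y') S x :=
  hy.hasDerivWithinAt.clm_apply_of_norm_le hA
    (tendsto_clm_apply_of_mem_closure hA hAK (hy.mem_closure_of_forall_mem hyK)) hAy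

end StrongDerivative

theorem propagator_difference_estimate_general
    {B D : Type*} [NormedAddCommGroup B] [NormedSpace ℝ B]
    [NormedAddCommGroup D] [NormedSpace ℝ D]
    (j : D →L[ℝ] B)
    (U : Fin 2 → ℝ → ℝ → (B →L[ℝ] B))
    (L : Fin 2 → ℝ → (D →L[ℝ] B))
    (V : ℝ → ℝ → (D →L[ℝ] D))
    (hUid : ∀ i t, U i t t = ContinuousLinearMap.id ℝ B)
    (hV : ∀ s r (f : D), j (V s r f) = U 0 s r (j f))
    (hgen_fwd : ∀ i t r (f : D), ∀ s ∈ Set.Icc t r,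
      HasDerivAt (fun σ => U i t σ (j f)) (U i t s (L i s f)) s)
    (hgen_bwd : ∀ t r (f : D), ∀ s ∈ Set.Icc t r,
      HasDerivAt (fun σ => U 0 σ r (j f)) (-(L 0 s (V s r f))) s)
    -- the uniform bounds `a₁` and `a₂`
    (a₁ a₂ : ℝ)
    (ha₁ : ∀ i t r, t ≤ r → ‖U i t r‖ ≤ a₁)
    (ha₂ : ∀ t r, t ≤ r → ‖V t r‖ ≤ a₂)
    {t r : ℝ} (htr : t ≤ r)
    -- any uniform bound on the difference of the generators on `[t, r]`
    (c : ℝ) (hc : ∀ s ∈ Set.Icc t r, ‖L 1 s - L 0 s‖ ≤ c)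
    (f : D) :
    ‖U 1 t r (j f) - U 0 t r (j f)‖ ≤ a₁ * a₂ * (r - t) * c * ‖f‖ := by
  have hderiv : ∀ s ∈ Icc t r, HasDerivWithinAt (fun σ => U 1 t σ (U 0 σ r (j f)))
      (U 1 t s ((L 1 s - L 0 s) (V s r f))) (Icc t r) s := by
    intro s hs
    have hUbound : ∀ᶠ σ in 𝓝[Icc t r] s, ‖U 1 t σ‖ ≤ a₁ :=
      eventually_nhdsWithin_of_forall fun σ hσ => ha₁ 1 t σ hσ.1
    have hcont : ∀ w ∈ LinearMap.range (j : D →ₗ[ℝ] B),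
        ContinuousWithinAt (fun σ => U 1 t σ w) (Icc t r) s := by
      rintro _ ⟨g, rfl⟩
      exact (hgen_fwd 1 t r g s hs).continuousAt.continuousWithinAt
    have hfrozen : HasDerivWithinAt (fun σ => U 1 t σ (U 0 s r (j f)))
        (U 1 t s (L 1 s (V s r f))) (Icc t r) s := by
      rw [← hV]
      exact (hgen_fwd 1 t r (V s r f) s hs).hasDerivWithinAt
    convert hfrozen.clm_apply_of_mem_submodule hUbound hcont (hgen_bwd t r f s hs)
      (fun σ => ⟨V σ r f, hV σ r f⟩) using 1
    simp [sub_eq_add_neg]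
  have ha₁0 : 0 ≤ a₁ := (norm_nonneg _).trans (ha₁ 0 t r htr)
  have hc0 : 0 ≤ c := (norm_nonneg _).trans (hc t ⟨le_rfl, htr⟩)
  have hbound : ∀ s ∈ Ico t r,
      ‖U 1 t s ((L 1 s - L 0 s) (V s r f))‖ ≤ a₁ * (c * (a₂ * ‖f‖)) := by
    intro s hs
    calc ‖U 1 t s ((L 1 s - L 0 s) (V s r f))‖
        ≤ a₁ * ‖(L 1 s - L 0 s) (V s r f)‖ := (U 1 t s).le_of_opNorm_le (ha₁ 1 t s hs.1) _
      _ ≤ a₁ * (c * ‖V s r f‖) := by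
        gcongr; exact (L 1 s - L 0 s).le_of_opNorm_le (hc s (Ico_subset_Icc_self hs)) _
      _ ≤ a₁ * (c * (a₂ * ‖f‖)) := by gcongr; exact (V s r).le_of_opNorm_le (ha₂ s r hs.2.le) f
  have hmvt := norm_image_sub_le_of_norm_deriv_le_segment' hderiv hbound r (right_mem_Icc.2 htr)
  simp only [hUid, ContinuousLinearMap.id_apply] at hmvt
  linarith

/-- **Norm estimate for the difference of two propagators** (Proposition 2.1, (2.3)).
Under the hypotheses of the propagator difference formula, with
`a₁ ≥ ‖U i t r‖_{B→B}` for all `t ≤ r` and `a₂ ≥ ‖U 0 t r‖_{D→D}`, one has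
`‖U 1 t r (j f) - U 0 t r (j f)‖ ≤ a₁ a₂ (r - t) sup_{t≤s≤r} ‖L 1 s - L 0 s‖ ‖f‖_D`. -/
theorem propagator_difference_estimate
    {B D : Type*} [NormedAddCommGroup B] [NormedSpace ℝ B] [CompleteSpace B]
    [NormedAddCommGroup D] [NormedSpace ℝ D] [CompleteSpace D]
    (j : D →L[ℝ] B)
    (U : Fin 2 → ℝ → ℝ → (B →L[ℝ] B))
    (L : Fin 2 → ℝ → (D →L[ℝ] B))
    (V : ℝ → ℝ → (D →L[ℝ] D))
    (hUid : ∀ i t, U i t t = ContinuousLinearMap.id ℝ B)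
    (hUchain : ∀ i t s r, t ≤ s → s ≤ r → (U i t s).comp (U i s r) = U i t r)
    (hLcont : ∀ i (f : D), Continuous fun s => L i s f)
    (hV : ∀ s r (f : D), j (V s r f) = U 0 s r (j f))
    (hgen_fwd : ∀ i t r (f : D), ∀ s ∈ Set.Icc t r,
      HasDerivAt (fun σ => U i t σ (j f)) (U i t s (L i s f)) s)
    (hgen_bwd : ∀ t r (f : D), ∀ s ∈ Set.Icc t r,
      HasDerivAt (fun σ => U 0 σ r (j f)) (-(L 0 s (V s r f))) s)
    -- the uniform bounds `a₁` and `a₂`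
    (a₁ a₂ : ℝ)
    (ha₁ : ∀ i t r, t ≤ r → ‖U i t r‖ ≤ a₁)
    (ha₂ : ∀ t r, t ≤ r → ‖V t r‖ ≤ a₂)
    {t r : ℝ} (htr : t ≤ r)
    -- any uniform bound on the difference of the generators on `[t, r]`
    (c : ℝ) (hc : ∀ s ∈ Set.Icc t r, ‖L 1 s - L 0 s‖ ≤ c)
    (f : D) :
    ‖U 1 t r (j f) - U 0 t r (j f)‖ ≤ a₁ * a₂ * (r - t) * c * ‖f‖ :=
  propagator_difference_estimate_general j U L V hUid hV hgen_fwd hgen_bwd a₁ a₂ ha₁ ha₂ htr c hc f
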